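/- Let h > 0 and c > 0. Then: (a) S_h'(ε) < +∞ for all ε > 0 if and only if I_c(ε) < +∞ for all ε > 0; (b) S_h'(ε) = +∞ for all ε > 0 if and only if I_c(ε) = +∞ for all ε > 0; (c) there exists ε' > 0 such that S_h'(ε) < +∞ for all ε > ε' and S_h'(ε) = +∞ for all ε < ε' if and only if there exists ε* > 0 such that I_c(ε) < +∞ for all ε > ε* and I_c(ε) = +∞ for all ε < ε*. -/

import Mathlib

open MeasureTheory Filter

/-- The squared Frobenius norm of `σ(s)`. -/
noncomputable def F2 {d r : ℕ} (σ : ℝ → Matrix (Fin d) (Fin r) ℝ) (s : ℝ) : ℝ :=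
  ∑ i : Fin d, ∑ j : Fin r, (σ s i j) ^ 2

/-- `θ_h(n)² = ∫_{nh}^{(n+1)h} ‖σ(s)‖_F² ds`. -/
noncomputable def theta2 {d r : ℕ} (σ : ℝ → Matrix (Fin d) (Fin r) ℝ) (h : ℝ) (n : ℕ) : ℝ :=
  ∫ s in ((n : ℝ) * h)..(((n : ℝ) + 1) * h), F2 σ s

/-- The `n`-th summand of `S_h'(ε)`, taken to be `0` when `θ_h(n) = 0`. -/
noncomputable def Sterm {d r : ℕ} (σ : ℝ → Matrix (Fin d) (Fin r) ℝ) (h ε : ℝ) (n : ℕ) : ℝ :=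
  if theta2 σ h n = 0 then 0
  else Real.sqrt (theta2 σ h n) * Real.exp (-(ε ^ 2) / (2 * theta2 σ h n))

/-- `S_h'(ε) = ∑_{n=1}^∞ θ_h(n) exp(-ε²/(2θ_h(n)²)) < +∞`.
Since all summands are nonnegative, finiteness is expressed as summability. -/
def SFinite {d r : ℕ} (σ : ℝ → Matrix (Fin d) (Fin r) ℝ) (h ε : ℝ) : Prop :=
  Summable fun n : ℕ => Sterm σ h ε (n + 1)

/-- `ς_c(t)² = ∫_t^{t+c} ‖σ(s)‖_F² ds`. -/
noncomputable def varsig2 {d r : ℕ} (σ : ℝ → Matrix (Fin d) (Fin r) ℝ) (c t : ℝ) : ℝ :=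
  ∫ s in t..(t + c), F2 σ s

/-- The integrand of `I_c(ε)`, taken to be `0` when `ς_c(t) = 0`. -/
noncomputable def Iterm {d r : ℕ} (σ : ℝ → Matrix (Fin d) (Fin r) ℝ) (c ε t : ℝ) : ℝ :=
  if varsig2 σ c t = 0 then 0
  else Real.sqrt (varsig2 σ c t) * Real.exp (-(ε ^ 2 / 2) / varsig2 σ c t)

/-- `I_c(ε) = ∫_0^∞ ς_c(t) exp(-(ε²/2)/ς_c(t)²) 1_{ς_c(t)>0} dt < +∞`.
Since the integrand is nonnegative, finiteness is expressed via the lower integral. -/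
def IFinite {d r : ℕ} (σ : ℝ → Matrix (Fin d) (Fin r) ℝ) (c ε : ℝ) : Prop :=
  ∫⁻ t in Set.Ici (0 : ℝ), ENNReal.ofReal (Iterm σ c ε t) < ⊤

/-!
With `g_ε(x) = √x · exp(-ε²/(2x))`, both `S_h'(ε)` and `I_c(ε)` sum or integrate `g_ε` over
masses `∫ ‖σ‖_F²` of intervals. The weight `g_ε` is increasing in `x`, decreasing in `ε`, and
`g_{√K ε}(K x) = √K g_ε(x)`; comparing a sum of `m` masses with `m` times the largest one gives
`g_{√m ε}(x₁ + ⋯ + xₘ) ≤ √m (g_ε(x₁) + ⋯ + g_ε(xₘ))`.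
A window `[t, t + c]` lies in `⌈c/h⌉ + 1` consecutive blocks of length `h`, and the block after the
one containing `t` is covered by the `⌈2h/c⌉` windows `[t + ic, t + (i+1)c]`. Integrating over `t`
block by block, `S_h'(ε) < ∞` forces `I_c(Kε) < ∞` and `I_c(ε) < ∞` forces `S_h'(Lε) < ∞` for
constants `K, L > 0`. Since both quantities are monotone in `ε`, each of the three regimes
(finite for all `ε`, infinite for all `ε`, a finite threshold) is invariant under such rescalings.
-/

open Set
open scoped ENNReal

noncomputable def gaussWeight (ε x : ℝ) : ℝ :=
  if x = 0 then 0 else √x * Real.exp (-(ε ^ 2 / 2) / x)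

lemma gaussWeight_nonneg (ε x : ℝ) : 0 ≤ gaussWeight ε x := by
  unfold gaussWeight; split_ifs <;> positivity

lemma measurable_gaussWeight (ε : ℝ) : Measurable (gaussWeight ε) :=
  Measurable.ite (measurableSet_singleton 0) measurable_const (by fun_prop)

lemma monotoneOn_gaussWeight (ε : ℝ) : MonotoneOn (gaussWeight ε) (Ici 0) := by
  intro x hx y _ hxy
  rcases (mem_Ici.1 hx).eq_or_lt with rfl | hx0
  · simpa [gaussWeight] using gaussWeight_nonneg ε y
  · have hy0 : 0 < y := hx0.trans_le hxy
    simp only [gaussWeight, hx0.ne', hy0.ne', if_false, neg_div]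
    gcongr

lemma antitoneOn_gaussWeight (x : ℝ) : AntitoneOn (fun ε => gaussWeight ε x) (Ici 0) := by
  intro a ha b _ hab
  simp only [gaussWeight]
  split_ifs
  · rfl
  rcases le_or_gt x 0 with hx | hx
  · simp [Real.sqrt_eq_zero_of_nonpos hx]
  · simp only [neg_div]
    gcongr

lemma gaussWeight_mul {K : ℝ} (hK : 0 < K) (ε x : ℝ) :
    gaussWeight (√K * ε) (K * x) = √K * gaussWeight ε x := by
  rcases eq_or_ne x 0 with rfl | hx
  · simp [gaussWeight]
  · simp only [gaussWeight, mul_ne_zero hK.ne' hx, hx, if_false, Real.sqrt_mul hK.le, mul_pow,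
      Real.sq_sqrt hK.le]
    have : -(K * ε ^ 2 / 2) / (K * x) = -(ε ^ 2 / 2) / x := by field_simp
    rw [this]
    ring

lemma gaussWeight_le_sum {ι : Type*} {s : Finset ι} (hs : s.Nonempty) {x : ι → ℝ}
    (hx : ∀ i ∈ s, 0 ≤ x i) {y : ℝ} (hy : 0 ≤ y) (hyx : y ≤ ∑ i ∈ s, x i) (ε : ℝ) :
    gaussWeight (√(s.card : ℝ) * ε) y ≤ √(s.card : ℝ) * ∑ i ∈ s, gaussWeight ε (x i) := by
  obtain ⟨i₀, hi₀, hmax⟩ := s.exists_max_image x hs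
  have hcard : (0 : ℝ) < s.card := by exact_mod_cast hs.card_pos
  calc gaussWeight (√(s.card : ℝ) * ε) y
      ≤ gaussWeight (√(s.card : ℝ) * ε) (s.card * x i₀) :=
        monotoneOn_gaussWeight _ hy (mul_nonneg hcard.le (hx i₀ hi₀))
          (hyx.trans (s.sum_le_card_nsmul x _ hmax |>.trans_eq (nsmul_eq_mul _ _)))
    _ = √(s.card : ℝ) * gaussWeight ε (x i₀) := gaussWeight_mul hcard ε _
    _ ≤ √(s.card : ℝ) * ∑ i ∈ s, gaussWeight ε (x i) := by
        gcongr
        exact s.single_le_sum (fun i _ => gaussWeight_nonneg ε (x i)) hi₀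

section Windows

variable {f : ℝ → ℝ}

variable (f) in
noncomputable def blockSq (h : ℝ) (n : ℕ) : ℝ := ∫ s in (n : ℝ) * h..((n : ℝ) + 1) * h, f s

variable (f) in
noncomputable def windowSq (c t : ℝ) : ℝ := ∫ s in t..t + c, f s

lemma blockSq_nonneg (hf0 : 0 ≤ f) {h : ℝ} (hh : 0 ≤ h) (n : ℕ) : 0 ≤ blockSq f h n :=
  intervalIntegral.integral_nonneg (by nlinarith) fun s _ => hf0 s

lemma windowSq_nonneg (hf0 : 0 ≤ f) {c : ℝ} (hc : 0 ≤ c) (t : ℝ) : 0 ≤ windowSq f c t :=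
  intervalIntegral.integral_nonneg (by linarith) fun s _ => hf0 s

lemma continuous_windowSq (hf : ∀ a b, IntervalIntegrable f volume a b) (c : ℝ) :
    Continuous (windowSq f c) := by
  have hF := intervalIntegral.continuous_primitive hf 0
  have h_eq : windowSq f c = fun t => (∫ s in (0 : ℝ)..t + c, f s) - ∫ s in (0 : ℝ)..t, f s :=
    funext fun t => (intervalIntegral.integral_interval_sub_left (hf 0 _) (hf 0 _)).symm
  rw [h_eq]
  exact (hF.comp (continuous_add_const c)).sub hF

lemma sum_integral_adjacent_arith (hf : ∀ a b, IntervalIntegrable f volume a b) (a δ : ℝ) (m : ℕ) :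
    ∑ k ∈ Finset.range m, ∫ s in a + k * δ..a + (k + 1) * δ, f s = ∫ s in a..a + m * δ, f s := by
  simpa using intervalIntegral.sum_integral_adjacent_intervals (a := fun k : ℕ => a + k * δ)
    (n := m) fun k _ => hf _ _

lemma integral_mono_interval_of_nonneg (hf : ∀ a b, IntervalIntegrable f volume a b)
    (hf0 : 0 ≤ f) {a b a' b' : ℝ} (ha : a' ≤ a) (hab : a ≤ b) (hb : b ≤ b') :
    ∫ s in a..b, f s ≤ ∫ s in a'..b', f s :=
  intervalIntegral.integral_mono_interval ha hab hb (Eventually.of_forall hf0) (hf a' b')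

lemma windowSq_le_sum_blockSq (hf : ∀ a b, IntervalIntegrable f volume a b) (hf0 : 0 ≤ f)
    {h c : ℝ} {m : ℕ} (hc : 0 ≤ c) (hcm : c ≤ m * h) {n : ℕ} {t : ℝ}
    (ht : t ∈ Ico ((n : ℝ) * h) ((n + 1) * h)) :
    windowSq f c t ≤ ∑ j ∈ Finset.range (m + 1), blockSq f h (n + j) := by
  have h_sum : ∑ j ∈ Finset.range (m + 1), blockSq f h (n + j)
      = ∫ s in n * h..n * h + ↑(m + 1) * h, f s := by
    rw [← sum_integral_adjacent_arith hf]
    refine Finset.sum_congr rfl fun j _ => ?_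
    simp only [blockSq]
    push_cast
    ring_nf
  rw [h_sum]
  refine integral_mono_interval_of_nonneg hf hf0 ht.1 (by linarith) ?_
  push_cast
  linarith [ht.2]

lemma blockSq_succ_le_sum_windowSq (hf : ∀ a b, IntervalIntegrable f volume a b) (hf0 : 0 ≤ f)
    {h c : ℝ} {M : ℕ} (hh : 0 ≤ h) (hMc : 2 * h ≤ M * c) {n : ℕ} {t : ℝ}
    (ht : t ∈ Ico ((n : ℝ) * h) ((n + 1) * h)) :
    blockSq f h (n + 1) ≤ ∑ i ∈ Finset.range M, windowSq f c (t + i * c) := by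
  have h_sum : ∑ i ∈ Finset.range M, windowSq f c (t + i * c) = ∫ s in t..t + M * c, f s := by
    rw [← sum_integral_adjacent_arith hf]
    refine Finset.sum_congr rfl fun i _ => ?_
    simp only [windowSq]
    ring_nf
  rw [h_sum, blockSq]
  push_cast
  exact integral_mono_interval_of_nonneg hf hf0 ht.2.le (by linarith) (by linarith [ht.1])

lemma integral_comp_max_zero (g : ℝ → ℝ) {a b : ℝ} (ha : 0 ≤ a) (hb : 0 ≤ b) :
    ∫ s in a..b, g (max s 0) = ∫ s in a..b, g s :=
  intervalIntegral.integral_congr fun s hs => by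
    rw [max_eq_left ((le_min ha hb).trans hs.1)]

end Windows

section Blocks

variable {h : ℝ}

lemma lintegral_Ici_eq_tsum_Ico (hh : 0 < h) (φ : ℝ → ℝ≥0∞) :
    ∫⁻ t in Ici 0, φ t = ∑' n : ℕ, ∫⁻ t in Ico ((n : ℝ) * h) ((n + 1) * h), φ t := by
  have hmono : Monotone fun n : ℕ => (n : ℝ) * h := fun a b hab =>
    mul_le_mul_of_nonneg_right (by exact_mod_cast hab) hh.le
  have hunbdd : ¬BddAbove (range fun n : ℕ => (n : ℝ) * h) :=
    not_bddAbove_of_tendsto_atTop (tendsto_natCast_atTop_atTop.atTop_mul_const hh)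
  have hcover := iUnion_Ico_map_succ_eq_Ici (fun n => hmono bot_le) hunbdd
  simp only [Order.succ_eq_add_one, Nat.cast_add_one, Nat.bot_eq_zero,
    Nat.cast_zero, zero_mul] at hcover
  rw [← hcover, lintegral_iUnion (fun n => measurableSet_Ico)]
  simpa using hmono.pairwise_disjoint_on_Ico_succ

lemma volume_Ico_nat_mul (n : ℕ) :
    volume (Ico ((n : ℝ) * h) ((n + 1) * h)) = ENNReal.ofReal h := by
  rw [Real.volume_Ico]
  ring_nf

lemma lintegral_Ici_le_tsum (hh : 0 < h) {φ : ℝ → ℝ≥0∞} {b : ℕ → ℝ≥0∞}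
    (hφ : ∀ n : ℕ, ∀ t ∈ Ico ((n : ℝ) * h) ((n + 1) * h), φ t ≤ b n) :
    ∫⁻ t in Ici 0, φ t ≤ ENNReal.ofReal h * ∑' n, b n := by
  rw [lintegral_Ici_eq_tsum_Ico hh, ← ENNReal.tsum_mul_left]
  refine ENNReal.tsum_le_tsum fun n => ?_
  calc ∫⁻ t in Ico ((n : ℝ) * h) ((n + 1) * h), φ t
      ≤ ∫⁻ _ in Ico ((n : ℝ) * h) ((n + 1) * h), b n := setLIntegral_mono' measurableSet_Ico (hφ n)
    _ = ENNReal.ofReal h * b n := by rw [setLIntegral_const, volume_Ico_nat_mul, mul_comm]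

lemma tsum_le_lintegral_Ici (hh : 0 < h) {φ : ℝ → ℝ≥0∞} {b : ℕ → ℝ≥0∞}
    (hφ : ∀ n : ℕ, ∀ t ∈ Ico ((n : ℝ) * h) ((n + 1) * h), b n ≤ φ t) :
    ENNReal.ofReal h * ∑' n, b n ≤ ∫⁻ t in Ici 0, φ t := by
  rw [lintegral_Ici_eq_tsum_Ico hh, ← ENNReal.tsum_mul_left]
  refine ENNReal.tsum_le_tsum fun n => ?_
  calc ENNReal.ofReal h * b n = ∫⁻ _ in Ico ((n : ℝ) * h) ((n + 1) * h), b n := by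
        rw [setLIntegral_const, volume_Ico_nat_mul, mul_comm]
    _ ≤ ∫⁻ t in Ico ((n : ℝ) * h) ((n + 1) * h), φ t := setLIntegral_mono' measurableSet_Ico (hφ n)

end Blocks

lemma lintegral_Ici_comp_add_le (G : ℝ → ℝ≥0∞) {a : ℝ} (ha : 0 ≤ a) :
    ∫⁻ t in Ici 0, G (t + a) ≤ ∫⁻ t in Ici 0, G t := by
  rw [(measurePreserving_add_right volume a).setLIntegral_comp_emb
    (MeasurableEquiv.addRight a).measurableEmbedding G, image_add_const_Ici, zero_add]
  exact lintegral_mono_set (Ici_subset_Ici.2 ha)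

section Transfer

variable {f : ℝ → ℝ} {h c ε : ℝ}

theorem lintegral_windowSq_lt_top_of_summable_blockSq
    (hf : ∀ a b, IntervalIntegrable f volume a b) (hf0 : 0 ≤ f) (hh : 0 < h) (hc : 0 ≤ c)
    (hS : Summable fun n => gaussWeight ε (blockSq f h (n + 1))) :
    ∫⁻ t in Ici 0, ENNReal.ofReal (gaussWeight (√((⌈c / h⌉₊ : ℝ) + 1) * ε) (windowSq f c t))
      < ∞ := by
  set m := ⌈c / h⌉₊
  have hcm : c ≤ m * h := (div_le_iff₀ hh).1 (Nat.le_ceil _)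
  set b : ℕ → ℝ := fun n => √((m : ℝ) + 1) *
    ∑ j ∈ Finset.range (m + 1), gaussWeight ε (blockSq f h (n + j))
  have hb : Summable b := by
    have ha := (summable_nat_add_iff (f := fun n => gaussWeight ε (blockSq f h n)) 1).1 hS
    exact (summable_sum fun j _ => (summable_nat_add_iff j).2 ha).mul_left _
  have hb0 : ∀ n, 0 ≤ b n := fun n =>
    mul_nonneg (Real.sqrt_nonneg _) (Finset.sum_nonneg fun j _ => gaussWeight_nonneg _ _)
  have h_block : ∀ n : ℕ, ∀ t ∈ Ico ((n : ℝ) * h) ((n + 1) * h),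
      ENNReal.ofReal (gaussWeight (√((m : ℝ) + 1) * ε) (windowSq f c t))
        ≤ ENNReal.ofReal (b n) := by
    intro n t ht
    gcongr
    simpa using gaussWeight_le_sum Finset.nonempty_range_add_one
      (fun j _ => blockSq_nonneg hf0 hh.le (n + j)) (windowSq_nonneg hf0 hc t)
      (windowSq_le_sum_blockSq hf hf0 hc hcm ht) ε
  calc _ ≤ ENNReal.ofReal h * ∑' n, ENNReal.ofReal (b n) := lintegral_Ici_le_tsum hh h_block
    _ < ∞ := by
      rw [← ENNReal.ofReal_tsum_of_nonneg hb0 hb]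
      exact ENNReal.mul_lt_top ENNReal.ofReal_lt_top ENNReal.ofReal_lt_top

theorem summable_blockSq_of_lintegral_windowSq_lt_top
    (hf : ∀ a b, IntervalIntegrable f volume a b) (hf0 : 0 ≤ f) (hh : 0 < h) (hc : 0 < c)
    (hI : ∫⁻ t in Ici 0, ENNReal.ofReal (gaussWeight ε (windowSq f c t)) < ∞) :
    Summable fun n => gaussWeight (√(⌈2 * h / c⌉₊ : ℝ) * ε) (blockSq f h (n + 1)) := by
  set M := ⌈2 * h / c⌉₊
  have hMc : 2 * h ≤ M * c := (div_le_iff₀ hc).1 (Nat.le_ceil _)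
  have hM : (Finset.range M).Nonempty := Finset.nonempty_range_iff.2 (by positivity)
  set G : ℝ → ℝ≥0∞ := fun t => ENNReal.ofReal (gaussWeight ε (windowSq f c t))
  have hG : Measurable G :=
    ((measurable_gaussWeight ε).comp (continuous_windowSq hf c).measurable).ennreal_ofReal
  have h_block : ∀ n : ℕ, ∀ t ∈ Ico ((n : ℝ) * h) ((n + 1) * h),
      ENNReal.ofReal (gaussWeight (√(M : ℝ) * ε) (blockSq f h (n + 1)))
        ≤ ENNReal.ofReal √(M : ℝ) * ∑ i ∈ Finset.range M, G (t + i * c) := by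
    intro n t ht
    rw [← ENNReal.ofReal_sum_of_nonneg fun i _ => gaussWeight_nonneg _ _,
      ← ENNReal.ofReal_mul (Real.sqrt_nonneg _)]
    gcongr
    simpa using gaussWeight_le_sum hM (fun i _ => windowSq_nonneg hf0 hc.le _)
      (blockSq_nonneg hf0 hh.le _) (blockSq_succ_le_sum_windowSq hf hf0 hh.le hMc ht) ε
  have h_tsum : ENNReal.ofReal h *
      ∑' n, ENNReal.ofReal (gaussWeight (√(M : ℝ) * ε) (blockSq f h (n + 1))) < ∞ :=
    calc _ ≤ ∫⁻ t in Ici 0, ENNReal.ofReal √(M : ℝ) * ∑ i ∈ Finset.range M, G (t + i * c) :=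
          tsum_le_lintegral_Ici hh h_block
      _ = ENNReal.ofReal √(M : ℝ) * ∑ i ∈ Finset.range M, ∫⁻ t in Ici 0, G (t + i * c) := by
          rw [lintegral_const_mul' _ _ ENNReal.ofReal_ne_top,
            lintegral_finsetSum (f := fun (i : ℕ) t => G (t + i * c)) _
              fun i _ => hG.comp (measurable_add_const _)]
      _ ≤ ENNReal.ofReal √(M : ℝ) * ∑ i ∈ Finset.range M, ∫⁻ t in Ici 0, G t := by
          gcongr _ * ∑ i ∈ _, ?_ with i
          exact lintegral_Ici_comp_add_le G (by positivity)
      _ < ∞ := ENNReal.mul_lt_top ENNReal.ofReal_lt_top (ENNReal.sum_lt_top.2 fun _ _ => hI)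
  have h_ne_top := (ENNReal.lt_top_of_mul_ne_top_right h_tsum.ne (by simpa using hh)).ne
  simpa [ENNReal.toReal_ofReal (gaussWeight_nonneg _ _)] using ENNReal.summable_toReal h_ne_top

end Transfer

section Thresholds

def HasThreshold (P : ℝ → Prop) : Prop :=
  ∃ ε' : ℝ, 0 < ε' ∧ (∀ ε : ℝ, ε' < ε → P ε) ∧ ∀ ε : ℝ, 0 < ε → ε < ε' → ¬ P ε

variable {P Q : ℝ → Prop}

lemma hasThreshold_iff (hP : MonotoneOn P (Ioi 0)) :
    HasThreshold P ↔ (∃ ε, 0 < ε ∧ P ε) ∧ ¬ ∀ ε, 0 < ε → P ε := by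
  constructor
  · rintro ⟨ε', hε', hP_above, hP_below⟩
    exact ⟨⟨ε' + 1, by linarith, hP_above _ (by linarith)⟩,
      fun hall => hP_below (ε' / 2) (by positivity) (by linarith) (hall _ (by positivity))⟩
  · rintro ⟨⟨ε₁, hε₁, hPε₁⟩, hnot⟩
    push Not at hnot
    obtain ⟨ε₀, hε₀, hPε₀⟩ := hnot
    set S := {ε | 0 < ε ∧ P ε}
    have hS : S.Nonempty := ⟨ε₁, hε₁, hPε₁⟩
    have hlow : ε₀ ∈ lowerBounds S := fun b ⟨hb, hPb⟩ =>
      le_of_not_gt fun hbε₀ => hPε₀ (hP hb hε₀ hbε₀.le hPb)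
    refine ⟨sInf S, hε₀.trans_le (le_csInf hS hlow), fun ε hε => ?_, fun ε hε hεS hPε => ?_⟩
    · obtain ⟨b, ⟨hb, hPb⟩, hbε⟩ := (csInf_lt_iff ⟨ε₀, hlow⟩ hS).1 hε
      exact hP hb (hb.trans hbε) hbε.le hPb
    · exact hεS.not_ge (csInf_le ⟨ε₀, hlow⟩ ⟨hε, hPε⟩)

lemma forall_pos_of_scaling {K : ℝ} (hK : 0 < K) (hPQ : ∀ ε, 0 < ε → P ε → Q (K * ε))
    (hP : ∀ ε, 0 < ε → P ε) (ε : ℝ) (hε : 0 < ε) : Q ε := by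
  simpa [mul_div_cancel₀ ε hK.ne'] using hPQ (ε / K) (by positivity) (hP _ (by positivity))

lemma exists_pos_of_scaling {K : ℝ} (hK : 0 < K) (hPQ : ∀ ε, 0 < ε → P ε → Q (K * ε)) :
    (∃ ε, 0 < ε ∧ P ε) → ∃ ε, 0 < ε ∧ Q ε :=
  fun ⟨ε, hε, hPε⟩ => ⟨K * ε, by positivity, hPQ ε hε hPε⟩

theorem finiteness_regimes_iff_of_scaling {K L : ℝ} (hK : 0 < K) (hL : 0 < L)
    (hP : MonotoneOn P (Ioi 0)) (hQ : MonotoneOn Q (Ioi 0))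
    (hPQ : ∀ ε, 0 < ε → P ε → Q (K * ε)) (hQP : ∀ ε, 0 < ε → Q ε → P (L * ε)) :
    ((∀ ε, 0 < ε → P ε) ↔ ∀ ε, 0 < ε → Q ε) ∧
    ((∀ ε, 0 < ε → ¬ P ε) ↔ ∀ ε, 0 < ε → ¬ Q ε) ∧
    (HasThreshold P ↔ HasThreshold Q) := by
  have h_all : (∀ ε, 0 < ε → P ε) ↔ ∀ ε, 0 < ε → Q ε :=
    ⟨forall_pos_of_scaling hK hPQ, forall_pos_of_scaling hL hQP⟩
  have h_ex : (∃ ε, 0 < ε ∧ P ε) ↔ ∃ ε, 0 < ε ∧ Q ε :=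
    ⟨exists_pos_of_scaling hK hPQ, exists_pos_of_scaling hL hQP⟩
  refine ⟨h_all, ?_, ?_⟩
  · simpa only [not_exists, not_and] using not_congr h_ex
  · rw [hasThreshold_iff hP, hasThreshold_iff hQ, h_all, h_ex]

end Thresholds

section Frobenius

variable {d r : ℕ} {σ : ℝ → Matrix (Fin d) (Fin r) ℝ}

lemma F2_nonneg (s : ℝ) : 0 ≤ F2 σ s :=
  Finset.sum_nonneg fun _ _ => Finset.sum_nonneg fun _ _ => sq_nonneg _

lemma continuous_F2_max_zero (hσ : ContinuousOn σ (Ici 0)) :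
    Continuous fun s => F2 σ (max s 0) := by
  have hF2 : ContinuousOn (F2 σ) (Ici 0) := by
    unfold F2
    fun_prop
  exact hF2.comp_continuous (continuous_id.max continuous_const) fun s => le_max_right s 0

lemma Sterm_eq_gaussWeight (h ε : ℝ) (n : ℕ) : Sterm σ h ε n = gaussWeight ε (theta2 σ h n) := by
  simp only [Sterm, gaussWeight]
  split_ifs
  · rfl
  · ring_nf

lemma sFinite_iff {h : ℝ} (hh : 0 ≤ h) (ε : ℝ) :
    SFinite σ h ε ↔
      Summable fun n => gaussWeight ε (blockSq (fun s => F2 σ (max s 0)) h (n + 1)) := by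
  have h_eq : ∀ n : ℕ, theta2 σ h n = blockSq (fun s => F2 σ (max s 0)) h n := fun n =>
    (integral_comp_max_zero _ (by positivity) (by positivity)).symm
  simp only [_root_.SFinite, Sterm_eq_gaussWeight, h_eq]

lemma iFinite_iff {c : ℝ} (hc : 0 ≤ c) (ε : ℝ) :
    IFinite σ c ε ↔ ∫⁻ t in Ici 0,
      ENNReal.ofReal (gaussWeight ε (windowSq (fun s => F2 σ (max s 0)) c t)) < ∞ := by
  have h_eq : ∀ t ∈ Ici (0 : ℝ), ENNReal.ofReal (Iterm σ c ε t)
      = ENNReal.ofReal (gaussWeight ε (windowSq (fun s => F2 σ (max s 0)) c t)) := by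
    intro t (ht : 0 ≤ t)
    rw [windowSq, integral_comp_max_zero _ ht (by positivity)]
    rfl
  rw [IFinite, setLIntegral_congr_fun measurableSet_Ici h_eq]

lemma monotoneOn_sFinite (h : ℝ) : MonotoneOn (SFinite σ h) (Ici 0) := by
  intro a ha b hb hab hS
  refine Summable.of_nonneg_of_le (fun n => ?_) (fun n => ?_) hS
  · rw [Sterm_eq_gaussWeight]
    exact gaussWeight_nonneg _ _
  · simp only [Sterm_eq_gaussWeight]
    exact antitoneOn_gaussWeight _ ha hb hab

lemma monotoneOn_iFinite (c : ℝ) : MonotoneOn (IFinite σ c) (Ici 0) := by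
  intro a ha b hb hab hI
  refine lt_of_le_of_lt (lintegral_mono fun t => ENNReal.ofReal_le_ofReal ?_) hI
  exact antitoneOn_gaussWeight _ ha hb hab

end Frobenius

theorem stmt_17_general (d r : ℕ)
    (σ : ℝ → Matrix (Fin d) (Fin r) ℝ) (hσ : ContinuousOn σ (Set.Ici 0))
    (h c : ℝ) (hh : 0 < h) (hc : 0 < c) :
    ((∀ ε : ℝ, 0 < ε → SFinite σ h ε) ↔ (∀ ε : ℝ, 0 < ε → IFinite σ c ε)) ∧
    ((∀ ε : ℝ, 0 < ε → ¬ SFinite σ h ε) ↔ (∀ ε : ℝ, 0 < ε → ¬ IFinite σ c ε)) ∧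
    ((∃ ε' : ℝ, 0 < ε' ∧ (∀ ε : ℝ, ε' < ε → SFinite σ h ε) ∧
        (∀ ε : ℝ, 0 < ε → ε < ε' → ¬ SFinite σ h ε)) ↔
      (∃ εs : ℝ, 0 < εs ∧ (∀ ε : ℝ, εs < ε → IFinite σ c ε) ∧
        (∀ ε : ℝ, 0 < ε → ε < εs → ¬ IFinite σ c ε))) := by
  -- `σ` is only continuous on `[0, ∞)`; extending `‖σ‖_F²` by its value at `0` makes it
  -- integrable on every interval and changes no integral over an interval in `[0, ∞)`.
  have hf : ∀ a b, IntervalIntegrable (fun s => F2 σ (max s 0)) volume a b :=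
    (continuous_F2_max_zero hσ).intervalIntegrable
  have hf0 : 0 ≤ fun s => F2 σ (max s 0) := fun _ => F2_nonneg _
  have hM : (0 : ℝ) < ⌈2 * h / c⌉₊ := by exact_mod_cast Nat.ceil_pos.2 (by positivity)
  exact finiteness_regimes_iff_of_scaling (by positivity) (Real.sqrt_pos.2 hM)
    ((monotoneOn_sFinite h).mono Ioi_subset_Ici_self)
    ((monotoneOn_iFinite c).mono Ioi_subset_Ici_self)
    (fun ε _ hS => (iFinite_iff hc.le _).2 <|
      lintegral_windowSq_lt_top_of_summable_blockSq hf hf0 hh hc.le ((sFinite_iff hh.le ε).1 hS))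
    (fun ε _ hI => (sFinite_iff hh.le _).2 <|
      summable_blockSq_of_lintegral_windowSq_lt_top hf hf0 hh hc ((iFinite_iff hc.le ε).1 hI))

theorem stmt_17 (d r : ℕ) (hd : 1 ≤ d) (hr : 1 ≤ r)
    (σ : ℝ → Matrix (Fin d) (Fin r) ℝ) (hσ : ContinuousOn σ (Set.Ici 0))
    (h c : ℝ) (hh : 0 < h) (hc : 0 < c) :
    ((∀ ε : ℝ, 0 < ε → SFinite σ h ε) ↔ (∀ ε : ℝ, 0 < ε → IFinite σ c ε)) ∧
    ((∀ ε : ℝ, 0 < ε → ¬ SFinite σ h ε) ↔ (∀ ε : ℝ, 0 < ε → ¬ IFinite σ c ε)) ∧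
    ((∃ ε' : ℝ, 0 < ε' ∧ (∀ ε : ℝ, ε' < ε → SFinite σ h ε) ∧
        (∀ ε : ℝ, 0 < ε → ε < ε' → ¬ SFinite σ h ε)) ↔
      (∃ εs : ℝ, 0 < εs ∧ (∀ ε : ℝ, εs < ε → IFinite σ c ε) ∧
        (∀ ε : ℝ, 0 < ε → ε < εs → ¬ IFinite σ c ε))) :=
  stmt_17_general d r σ hσ h c hh hc
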